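/- arXiv:math/0404402 — 4 statements merged into one kernel-verified Lean document; each statement's English description precedes it below -/
import Mathlib

section
/- If K is a conditionally negative definite kernel on a set X with K(x,y) ≥ 0 for all x, y, then for every t ≥ 0 the kernel (x,y) ↦ 1 - exp(-t·K(x,y)) is also conditionally negative definite. -/
open Finset

namespace CNDaux

variable {n : ℕ}

/-- Gram decomposition of a symmetric matrix with nonnegative quadratic form. -/
lemma gram (A : Fin n → Fin n → ℝ) (hsym : ∀ i j, A i j = A j i)
    (h : ∀ c : Fin n → ℝ, 0 ≤ ∑ i, ∑ j, A i j * c i * c j) :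
    ∃ g : Fin n → Fin n → ℝ, ∀ i j, A i j = ∑ k, g k i * g k j := by
  have hpsd : Matrix.PosSemidef (Matrix.of A) := by
    rw [Matrix.posSemidef_iff_dotProduct_mulVec]
    constructor
    · ext i j
      simp only [Matrix.conjTranspose_apply, Matrix.of_apply, star_trivial]
      exact hsym j i
    · intro x
      have := h x
      simp only [dotProduct, Matrix.mulVec, star_trivial, Matrix.of_apply]
      calc (0:ℝ) ≤ ∑ i, ∑ j, A i j * x i * x j := this
        _ = ∑ i, x i * ∑ j, A i j * x j := by
            refine Finset.sum_congr rfl fun i _ => ?_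
            rw [Finset.mul_sum]
            exact Finset.sum_congr rfl fun j _ => by ring
        _ = ∑ i, x i * (fun j => ∑ k, A j k * x k) i := rfl
  obtain ⟨B, hB⟩ : ∃ B : Matrix (Fin n) (Fin n) ℝ, Matrix.of A = B.conjTranspose * B := by
    open scoped MatrixOrder in
    exact CStarAlgebra.nonneg_iff_eq_star_mul_self.mp hpsd.nonneg
  refine ⟨fun k i => B k i, fun i j => ?_⟩
  have h2 : (Matrix.of A) i j = (B.conjTranspose * B) i j := by rw [hB]
  simpa [Matrix.mul_apply, Matrix.conjTranspose_apply] using h2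

/-- Schur product: quadratic form of an entrywise product is nonneg. -/
lemma schur (A B : Fin n → Fin n → ℝ)
    (hA : ∀ c : Fin n → ℝ, 0 ≤ ∑ i, ∑ j, A i j * c i * c j)
    (g : Fin n → Fin n → ℝ) (hB : ∀ i j, B i j = ∑ k, g k i * g k j)
    (c : Fin n → ℝ) :
    0 ≤ ∑ i, ∑ j, A i j * B i j * c i * c j := by
  have key : ∑ i, ∑ j, A i j * B i j * c i * c j
      = ∑ k, ∑ i, ∑ j, A i j * (g k i * c i) * (g k j * c j) := by
    calc ∑ i, ∑ j, A i j * B i j * c i * c j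
        = ∑ i, ∑ j, ∑ k, A i j * (g k i * c i) * (g k j * c j) := by
          refine Finset.sum_congr rfl fun i _ => Finset.sum_congr rfl fun j _ => ?_
          rw [hB, Finset.mul_sum, Finset.sum_mul, Finset.sum_mul]
          exact Finset.sum_congr rfl fun k _ => by ring
      _ = ∑ i, ∑ k, ∑ j, A i j * (g k i * c i) * (g k j * c j) := by
          exact Finset.sum_congr rfl fun i _ => Finset.sum_comm
      _ = ∑ k, ∑ i, ∑ j, A i j * (g k i * c i) * (g k j * c j) := Finset.sum_comm
  rw [key]
  refine Finset.sum_nonneg fun k _ => hA (fun i => g k i * c i)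

lemma pow_form_nonneg (A : Fin n → Fin n → ℝ) (hsym : ∀ i j, A i j = A j i)
    (hA : ∀ c : Fin n → ℝ, 0 ≤ ∑ i, ∑ j, A i j * c i * c j) :
    ∀ (m : ℕ) (c : Fin n → ℝ), 0 ≤ ∑ i, ∑ j, (A i j) ^ m * c i * c j := by
  intro m
  induction m with
  | zero =>
    intro c
    have : ∑ i, ∑ j, (A i j) ^ 0 * c i * c j = (∑ i, c i) * (∑ j, c j) := by
      rw [Finset.sum_mul_sum]
      exact Finset.sum_congr rfl fun i _ => Finset.sum_congr rfl fun j _ => by ring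
    rw [this, ← sq]
    positivity
  | succ m ih =>
    intro c
    obtain ⟨g, hg⟩ := gram A hsym hA
    have := schur (fun i j => (A i j) ^ m) A ih g hg c
    calc (0:ℝ) ≤ ∑ i, ∑ j, (A i j) ^ m * A i j * c i * c j := this
      _ = ∑ i, ∑ j, (A i j) ^ (m + 1) * c i * c j := by
          refine Finset.sum_congr rfl fun i _ => Finset.sum_congr rfl fun j _ => ?_
          rw [pow_succ]

lemma exp_form_nonneg (A : Fin n → Fin n → ℝ) (hsym : ∀ i j, A i j = A j i)
    (hA : ∀ c : Fin n → ℝ, 0 ≤ ∑ i, ∑ j, A i j * c i * c j)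
    (c : Fin n → ℝ) :
    0 ≤ ∑ i, ∑ j, Real.exp (A i j) * c i * c j := by
  have hsumm : ∀ i j : Fin n, Summable (fun m : ℕ => (A i j) ^ m / (Nat.factorial m : ℝ) * c i * c j) :=
    fun i j => ((Real.summable_pow_div_factorial (A i j)).mul_right _).mul_right _
  have hterm : ∀ i j : Fin n,
      Real.exp (A i j) * c i * c j = ∑' m : ℕ, (A i j) ^ m / (Nat.factorial m : ℝ) * c i * c j := by
    intro i j
    rw [Real.exp_eq_exp_ℝ, NormedSpace.exp_eq_tsum_div]
    rw [← tsum_mul_right, ← tsum_mul_right]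
  calc (0:ℝ) ≤ ∑' m : ℕ, ∑ i, ∑ j, (A i j) ^ m / (Nat.factorial m : ℝ) * c i * c j := by
        refine tsum_nonneg fun m => ?_
        have : ∑ i, ∑ j, (A i j) ^ m / (Nat.factorial m : ℝ) * c i * c j
            = (1 / (Nat.factorial m : ℝ)) * ∑ i, ∑ j, (A i j) ^ m * c i * c j := by
          rw [Finset.mul_sum]
          refine Finset.sum_congr rfl fun i _ => ?_
          rw [Finset.mul_sum]
          exact Finset.sum_congr rfl fun j _ => by ring
        rw [this]
        have h1 : (0:ℝ) ≤ 1 / (Nat.factorial m : ℝ) := by positivity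
        exact mul_nonneg h1 (pow_form_nonneg A hsym hA m c)
    _ = ∑ i, ∑ j, ∑' m : ℕ, (A i j) ^ m / (Nat.factorial m : ℝ) * c i * c j := by
        rw [Summable.tsum_finsetSum (fun i _ => summable_sum fun j _ => hsumm i j)]
        exact Finset.sum_congr rfl fun i _ => Summable.tsum_finsetSum (fun j _ => hsumm i j)
    _ = ∑ i, ∑ j, Real.exp (A i j) * c i * c j := by
        exact Finset.sum_congr rfl fun i _ => Finset.sum_congr rfl fun j _ =>
          (hterm i j).symm

end CNDaux

/-- A conditionally negative definite kernel: symmetric, and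
`∑ᵢⱼ K(xᵢ,xⱼ) cᵢ cⱼ ≤ 0` whenever `∑ cᵢ = 0`. -/
def IsCND {X : Type*} (K : X → X → ℝ) : Prop :=
  (∀ x y, K x y = K y x) ∧
  ∀ (n : ℕ) (x : Fin n → X) (c : Fin n → ℝ),
    (∑ i, c i) = 0 → (∑ i, ∑ j, K (x i) (x j) * c i * c j) ≤ 0

theorem cnd_one_sub_exp {X : Type*} (K : X → X → ℝ)
    (hK : IsCND K) (hpos : ∀ x y, 0 ≤ K x y) (t : ℝ) (ht : 0 ≤ t) :
    IsCND (fun x y => 1 - Real.exp (-t * K x y)) := by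
  obtain ⟨hsymK, hKneg⟩ := hK
  constructor
  · intro x y
    simp only [hsymK x y]
  · intro n x c hc
    -- the key positivity fact
    have key : 0 ≤ ∑ i, ∑ j, Real.exp (-t * K (x i) (x j)) * c i * c j := by
      rcases Nat.eq_zero_or_pos n with h0 | hn
      · subst h0; simp
      set o : Fin n := ⟨0, hn⟩ with ho
      set A : Fin n → Fin n → ℝ := fun i j => K (x i) (x j) with hA
      have hAsym : ∀ i j, A i j = A j i := fun i j => hsymK (x i) (x j)
      set ψ : Fin n → Fin n → ℝ := fun i j => t * (A i o + A j o - A i j - A o o) with hψ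
      have hψsym : ∀ i j, ψ i j = ψ j i := by
        intro i j
        simp only [hψ]
        rw [hAsym i j]
        ring
      -- ψ has nonnegative quadratic form
      have hψpos : ∀ d : Fin n → ℝ, 0 ≤ ∑ i, ∑ j, ψ i j * d i * d j := by
        intro d
        set s : ℝ := ∑ i, d i with hs
        set e : Fin n → ℝ := fun i => d i - (if i = o then s else 0) with he
        have hesum : ∑ i, e i = 0 := by
          simp only [he, Finset.sum_sub_distrib, Finset.sum_ite_eq', Finset.mem_univ,
            if_true, ← hs, sub_self]
        have hneg : ∑ i, ∑ j, A i j * e i * e j ≤ 0 := hKneg n x e hesum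
        set S : ℝ := ∑ k, A k o * d k with hS
        set QA : ℝ := ∑ i, ∑ j, A i j * d i * d j with hQA
        have I1 : ∑ i, ∑ j, A i o * d i * d j = S * s := by
          rw [hS, hs, Finset.sum_mul_sum]
        have I2 : ∑ i, ∑ j, A j o * d i * d j = s * S := by
          rw [hS, hs, Finset.sum_mul_sum]
          exact Finset.sum_congr rfl fun i _ => Finset.sum_congr rfl fun j _ => by ring
        have I3 : ∑ i, ∑ j, A o o * (d i * d j) = A o o * (s * s) := by
          rw [show s * s = ∑ i, ∑ j, d i * d j from by rw [hs, Finset.sum_mul_sum],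
            Finset.mul_sum]
          exact Finset.sum_congr rfl fun i _ => (Finset.mul_sum _ _ _).symm
        have L : ∑ i, ∑ j, ψ i j * d i * d j
            = t * (S * s) + t * (s * S) - t * QA - t * (A o o * (s * s)) := by
          have expand : ∀ i j : Fin n, ψ i j * d i * d j
              = A i o * d i * d j + A j o * d i * d j - A i j * d i * d j
                - A o o * (d i * d j)
              → True := fun _ _ _ => trivial
          calc ∑ i, ∑ j, ψ i j * d i * d j
              = ∑ i, ∑ j, (t * (A i o * d i * d j) + t * (A j o * d i * d j)
                  - t * (A i j * d i * d j) - t * (A o o * (d i * d j))) := by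
                refine Finset.sum_congr rfl fun i _ => Finset.sum_congr rfl fun j _ => ?_
                simp only [hψ]; ring
            _ = (∑ i, ∑ j, t * (A i o * d i * d j)) + (∑ i, ∑ j, t * (A j o * d i * d j))
                - (∑ i, ∑ j, t * (A i j * d i * d j))
                - (∑ i, ∑ j, t * (A o o * (d i * d j))) := by
                simp only [Finset.sum_add_distrib, Finset.sum_sub_distrib]
            _ = t * (∑ i, ∑ j, A i o * d i * d j) + t * (∑ i, ∑ j, A j o * d i * d j)
                - t * (∑ i, ∑ j, A i j * d i * d j)
                - t * (∑ i, ∑ j, A o o * (d i * d j)) := by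
                simp only [← Finset.mul_sum]
            _ = t * (S * s) + t * (s * S) - t * QA - t * (A o o * (s * s)) := by
                rw [I1, I2, I3, ← hQA]
        have hST : ∑ j, A o j * d j = S := by
          rw [hS]
          exact Finset.sum_congr rfl fun j _ => by rw [hAsym o j]
        have R : ∑ i, ∑ j, A i j * e i * e j = QA - S * s - s * S + A o o * (s * s) := by
          have J1 : ∑ i, ∑ j, A i j * d i * (if j = o then s else 0) = S * s := by
            have inner : ∀ i : Fin n,
                ∑ j, A i j * d i * (if j = o then s else 0) = A i o * d i * s := by
              intro i
              rw [show (∑ j, A i j * d i * (if j = o then s else 0))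
                  = ∑ j, (if j = o then A i j * d i * s else 0) from
                Finset.sum_congr rfl fun j _ => by split_ifs <;> simp]
              simp [Finset.sum_ite_eq']
            rw [Finset.sum_congr rfl fun i _ => inner i, Finset.sum_mul]
          have J2 : ∑ i, ∑ j, A i j * (if i = o then s else 0) * e j
              = ∑ j, A o j * s * e j := by
            rw [Finset.sum_comm]
            refine Finset.sum_congr rfl fun j _ => ?_
            rw [show (∑ i, A i j * (if i = o then s else 0) * e j)
                = ∑ i, (if i = o then A i j * s * e j else 0) from
              Finset.sum_congr rfl fun i _ => by split_ifs <;> simp]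
            simp [Finset.sum_ite_eq']
          calc ∑ i, ∑ j, A i j * e i * e j
              = ∑ i, ∑ j, (A i j * d i * e j - A i j * (if i = o then s else 0) * e j) := by
                refine Finset.sum_congr rfl fun i _ => Finset.sum_congr rfl fun j _ => ?_
                simp only [he]; ring
            _ = (∑ i, ∑ j, A i j * d i * e j)
                - ∑ i, ∑ j, A i j * (if i = o then s else 0) * e j := by
                simp only [Finset.sum_sub_distrib]
            _ = (∑ i, ∑ j, (A i j * d i * d j - A i j * d i * (if j = o then s else 0)))
                - ∑ j, A o j * s * e j := by
                rw [J2]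
                refine congrArg (· - _) ?_
                refine Finset.sum_congr rfl fun i _ => Finset.sum_congr rfl fun j _ => ?_
                simp only [he]; ring
            _ = QA - S * s - ∑ j, A o j * s * e j := by
                simp only [Finset.sum_sub_distrib, J1, hQA]
            _ = QA - S * s - (s * S - A o o * (s * s)) := by
                have : ∑ j, A o j * s * e j = s * S - A o o * (s * s) := by
                  calc ∑ j, A o j * s * e j
                      = ∑ j, (A o j * s * d j - A o j * s * (if j = o then s else 0)) := by
                        refine Finset.sum_congr rfl fun j _ => ?_
                        simp only [he]; ring
                    _ = s * (∑ j, A o j * d j)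
                        - ∑ j, (if j = o then A o j * s * s else 0) := by
                        rw [Finset.sum_sub_distrib, Finset.mul_sum]
                        refine congrArg₂ (· - ·) ?_ ?_
                        · exact Finset.sum_congr rfl fun j _ => by ring
                        · exact Finset.sum_congr rfl fun j _ => by split_ifs <;> simp
                    _ = s * S - A o o * (s * s) := by
                        rw [hST]
                        simp [Finset.sum_ite_eq']
                        ring
                rw [this]
            _ = QA - S * s - s * S + A o o * (s * s) := by ring
        rw [L]
        rw [R] at hneg
        nlinarith [mul_nonneg ht (neg_nonneg.mpr hneg)]
      -- entrywise exp of ψ gives the result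
      set α : Fin n → ℝ := fun i => -t * A i o + t * A o o / 2 with hα
      have hexp := CNDaux.exp_form_nonneg ψ hψsym hψpos (fun i => c i * Real.exp (α i))
      calc (0:ℝ) ≤ ∑ i, ∑ j, Real.exp (ψ i j) * (c i * Real.exp (α i))
            * (c j * Real.exp (α j)) := hexp
        _ = ∑ i, ∑ j, Real.exp (-t * K (x i) (x j)) * c i * c j := by
          refine Finset.sum_congr rfl fun i _ => Finset.sum_congr rfl fun j _ => ?_
          have h1 : Real.exp (ψ i j) * Real.exp (α i) * Real.exp (α j)
              = Real.exp (-t * A i j) := by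
            rw [← Real.exp_add, ← Real.exp_add]
            congr 1
            simp only [hψ, hα]
            ring
          calc Real.exp (ψ i j) * (c i * Real.exp (α i)) * (c j * Real.exp (α j))
              = (Real.exp (ψ i j) * Real.exp (α i) * Real.exp (α j)) * c i * c j := by ring
            _ = Real.exp (-t * K (x i) (x j)) * c i * c j := by rw [h1]
    -- conclude
    have split : ∑ i, ∑ j, (1 - Real.exp (-t * K (x i) (x j))) * c i * c j
        = (∑ i, c i) * (∑ j, c j)
          - ∑ i, ∑ j, Real.exp (-t * K (x i) (x j)) * c i * c j := by
      rw [Finset.sum_mul_sum, ← Finset.sum_sub_distrib]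
      refine Finset.sum_congr rfl fun i _ => ?_
      rw [← Finset.sum_sub_distrib]
      exact Finset.sum_congr rfl fun j _ => by ring
    simp only [split, hc, zero_mul]
    linarith [key]
end

section
/- If K is a nonnegative conditionally negative definite kernel on a set X, then K^α is conditionally negative definite for every α with 0 < α < 1. -/
open Finset MeasureTheory Set

/-- Auxiliary: positive semidefinite kernel on `Fin n` (quadratic-form sense). -/
def PSDker {n : ℕ} (A : Fin n → Fin n → ℝ) : Prop :=
  ∀ c : Fin n → ℝ, 0 ≤ ∑ i, ∑ j, A i j * c i * c j

lemma psd_matrix {n : ℕ} {A : Fin n → Fin n → ℝ}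
    (hsymm : ∀ i j, A i j = A j i) (hA : PSDker A) :
    (Matrix.of A).PosSemidef := by
  rw [Matrix.posSemidef_iff_dotProduct_mulVec]
  constructor
  · ext i j
    simp [Matrix.conjTranspose_apply, hsymm i j]
  · intro x
    have := hA x
    simpa [dotProduct, Matrix.mulVec, Finset.mul_sum, mul_comm, mul_assoc,
      mul_left_comm] using this

open scoped MatrixOrder in
lemma psd_schur {n : ℕ} {A B : Fin n → Fin n → ℝ}
    (hA : PSDker A) (hBs : ∀ i j, B i j = B j i) (hB : PSDker B) :
    PSDker (fun i j => A i j * B i j) := by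
  intro c
  obtain ⟨hM⟩ : Nonempty True := ⟨trivial⟩
  have hPSD := psd_matrix hBs hB
  set M := CFC.sqrt (Matrix.of B) with hMdef
  have hMM : M * M = Matrix.of B := CFC.sqrt_mul_sqrt_self _ hPSD.nonneg
  have hMsymm : ∀ i j, M i j = M j i := by
    intro i j
    have h := (Matrix.nonneg_iff_posSemidef.mp (CFC.sqrt_nonneg (Matrix.of B))).isHermitian
    have := congrFun (congrFun h i) j
    simpa [Matrix.conjTranspose_apply] using this.symm
  have hBentry : ∀ i j, B i j = ∑ k, M k i * M k j := by
    intro i j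
    have := congrFun (congrFun hMM i) j
    rw [Matrix.mul_apply] at this
    rw [show B i j = Matrix.of B i j from rfl, ← this]
    exact Finset.sum_congr rfl fun k _ => by rw [hMsymm i k]
  calc (0:ℝ) ≤ ∑ k, ∑ i, ∑ j, A i j * (M k i * c i) * (M k j * c j) := by
        exact Finset.sum_nonneg fun k _ => hA (fun i => M k i * c i)
    _ = ∑ i, ∑ j, (fun i j => A i j * B i j) i j * c i * c j := by
        rw [Finset.sum_comm]
        refine Finset.sum_congr rfl fun i _ => ?_
        rw [Finset.sum_comm]
        refine Finset.sum_congr rfl fun j _ => ?_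
        simp only [hBentry i j, Finset.mul_sum, Finset.sum_mul]
        exact Finset.sum_congr rfl fun k _ => by ring

lemma psd_pow {n : ℕ} {A : Fin n → Fin n → ℝ}
    (hsymm : ∀ i j, A i j = A j i) (hA : PSDker A) (m : ℕ) :
    PSDker (fun i j => A i j ^ m) := by
  induction m with
  | zero =>
    intro c
    have : ∑ i, ∑ j, (fun i j => A i j ^ 0) i j * c i * c j = (∑ i, c i) ^ 2 := by
      simp [sq, Finset.sum_mul, Finset.mul_sum]
      exact Finset.sum_congr rfl fun i _ => Finset.sum_congr rfl fun j _ => by ring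
    rw [this]; positivity
  | succ m ih =>
    have := psd_schur ih (fun i j => hsymm i j) hA
    intro c
    have h := this c
    simpa [pow_succ, mul_comm, mul_assoc, mul_left_comm] using h

lemma psd_exp {n : ℕ} {A : Fin n → Fin n → ℝ}
    (hsymm : ∀ i j, A i j = A j i) (hA : PSDker A) :
    PSDker (fun i j => Real.exp (A i j)) := by
  intro c
  have hexp : ∀ x : ℝ, Real.exp x = ∑' k : ℕ, x ^ k / (Nat.factorial k : ℝ) := by
    intro x
    rw [Real.exp_eq_exp_ℝ, NormedSpace.exp_eq_tsum_div]
  have hsummable : ∀ (p : Fin n × Fin n),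
      Summable (fun k : ℕ => A p.1 p.2 ^ k / (Nat.factorial k : ℝ) * c p.1 * c p.2) :=
    fun p => ((Real.summable_pow_div_factorial _).mul_right _).mul_right _
  calc (0:ℝ) ≤ ∑' k : ℕ, ∑ p : Fin n × Fin n, A p.1 p.2 ^ k / (Nat.factorial k : ℝ) * c p.1 * c p.2 := by
        refine tsum_nonneg fun k => ?_
        have h := psd_pow hsymm hA k c
        rw [← Finset.sum_product'] at h
        have : ∑ p : Fin n × Fin n, A p.1 p.2 ^ k / (Nat.factorial k : ℝ) * c p.1 * c p.2
            = (1 / (Nat.factorial k : ℝ)) * ∑ p : Fin n × Fin n, A p.1 p.2 ^ k * c p.1 * c p.2 := by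
          rw [Finset.mul_sum]
          exact Finset.sum_congr rfl fun p _ => by ring
        rw [this]
        have hk : (0:ℝ) ≤ 1 / (Nat.factorial k : ℝ) := by positivity
        exact mul_nonneg hk h
    _ = ∑ p : Fin n × Fin n, ∑' k : ℕ, A p.1 p.2 ^ k / (Nat.factorial k : ℝ) * c p.1 * c p.2 :=
        Summable.tsum_finsetSum (fun p _ => hsummable p)
    _ = ∑ i, ∑ j, (fun i j => Real.exp (A i j)) i j * c i * c j := by
        rw [← Finset.sum_product']
        refine Finset.sum_congr rfl fun p _ => ?_
        simp only []
        rw [hexp, tsum_mul_right, tsum_mul_right]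

lemma schoenberg {X : Type*} {K : X → X → ℝ} (hK : IsCND K)
    {n : ℕ} (x : Fin n → X) {t : ℝ} (ht : 0 ≤ t) :
    PSDker (fun i j => Real.exp (-(t * K (x i) (x j)))) := by
  obtain ⟨hsymm, hcnd⟩ := hK
  match n with
  | 0 => intro c; simp
  | (m+1) =>
    set ψ : Fin (m+1) → Fin (m+1) → ℝ := fun i j =>
      K (x i) (x 0) + K (x 0) (x j) - K (x i) (x j) - K (x 0) (x 0) with hψ
    have hψsymm : ∀ i j, ψ i j = ψ j i := by
      intro i j; simp only [hψ]
      rw [hsymm (x i) (x 0), hsymm (x i) (x j), hsymm (x 0) (x j)]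
      ring
    have hψpsd : PSDker ψ := by
      intro c
      set s : ℝ := ∑ i, c i with hs
      set e : Fin (m+1) → ℝ := fun i => if i = 0 then s else 0 with he
      set d : Fin (m+1) → ℝ := fun i => c i - e i with hd
      have hdsum : (∑ i, d i) = 0 := by
        simp only [hd]
        rw [Finset.sum_sub_distrib]
        simp [he, ← hs]
      have hneg := hcnd (m+1) x d hdsum
      have collapse : ∀ f : Fin (m+1) → ℝ, ∑ i, e i * f i = s * f 0 := by
        intro f; simp [he, ite_mul]
      have hT2 : ∑ i, ∑ j, K (x i) (x j) * e i * c j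
          = s * ∑ j, K (x 0) (x j) * c j := by
        have h1 : ∀ i : Fin (m+1), ∑ j, K (x i) (x j) * e i * c j
            = e i * (∑ j, K (x i) (x j) * c j) := by
          intro i; rw [Finset.mul_sum]
          exact Finset.sum_congr rfl fun j _ => by ring
        rw [Finset.sum_congr rfl fun i _ => h1 i, collapse]
      have hT3 : ∑ i, ∑ j, K (x i) (x j) * c i * e j
          = s * ∑ i, K (x i) (x 0) * c i := by
        have h1 : ∀ i : Fin (m+1), ∑ j, K (x i) (x j) * c i * e j
            = s * (K (x i) (x 0) * c i) := by
          intro i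
          have := collapse (fun j => K (x i) (x j) * c i)
          rw [← this]
          exact Finset.sum_congr rfl fun j _ => by ring
        rw [Finset.sum_congr rfl fun i _ => h1 i, ← Finset.mul_sum]
      have hT4 : ∑ i, ∑ j, K (x i) (x j) * e i * e j = s * (s * K (x 0) (x 0)) := by
        have h1 : ∀ i : Fin (m+1), ∑ j, K (x i) (x j) * e i * e j
            = e i * (s * K (x i) (x 0)) := by
          intro i
          have := collapse (fun j => K (x i) (x j) * e i)
          rw [Finset.sum_congr rfl (fun j _ => show K (x i) (x j) * e i * e j
            = e j * (K (x i) (x j) * e i) from by ring), this]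
          ring
        rw [Finset.sum_congr rfl fun i _ => h1 i, collapse]
      have hQd : ∑ i, ∑ j, K (x i) (x j) * d i * d j
          = ∑ i, ∑ j, K (x i) (x j) * c i * c j
            - s * (∑ j, K (x 0) (x j) * c j) - s * (∑ i, K (x i) (x 0) * c i)
            + s * (s * K (x 0) (x 0)) := by
        have h1 : ∀ i j : Fin (m+1), K (x i) (x j) * d i * d j
            = K (x i) (x j) * c i * c j - K (x i) (x j) * e i * c j
              - K (x i) (x j) * c i * e j + K (x i) (x j) * e i * e j := by
          intro i j; simp only [hd]; ring
        simp only [h1, Finset.sum_add_distrib, Finset.sum_sub_distrib]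
        rw [hT2, hT3, hT4]
      have expψ : ∑ i, ∑ j, ψ i j * c i * c j
          = s * (∑ i, K (x i) (x 0) * c i) + s * (∑ j, K (x 0) (x j) * c j)
            - ∑ i, ∑ j, K (x i) (x j) * c i * c j - s * (s * K (x 0) (x 0)) := by
        have h1 : ∀ i j : Fin (m+1), ψ i j * c i * c j
            = K (x i) (x 0) * c i * c j + K (x 0) (x j) * c j * c i
              - K (x i) (x j) * c i * c j - K (x 0) (x 0) * c i * c j := by
          intro i j; simp only [hψ]; ring
        simp only [h1, Finset.sum_add_distrib, Finset.sum_sub_distrib]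
        have e1 : ∑ i, ∑ j, K (x i) (x 0) * c i * c j
            = s * (∑ i, K (x i) (x 0) * c i) := by
          have h2 : ∀ i : Fin (m+1), ∑ j, K (x i) (x 0) * c i * c j
              = K (x i) (x 0) * c i * s := by
            intro i; rw [← Finset.mul_sum]
          rw [Finset.sum_congr rfl fun i _ => h2 i, ← Finset.sum_mul]
          ring
        have e2 : ∑ i, ∑ j, K (x 0) (x j) * c j * c i
            = s * (∑ j, K (x 0) (x j) * c j) := by
          have h2 : ∀ i : Fin (m+1), ∑ j, K (x 0) (x j) * c j * c i
              = (∑ j, K (x 0) (x j) * c j) * c i := by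
            intro i; rw [Finset.sum_mul]
          rw [Finset.sum_congr rfl fun i _ => h2 i, ← Finset.mul_sum]
          ring
        have e3 : ∑ i : Fin (m+1), ∑ j : Fin (m+1), K (x 0) (x 0) * c i * c j
            = s * (s * K (x 0) (x 0)) := by
          have h2 : ∀ i : Fin (m+1), ∑ j, K (x 0) (x 0) * c i * c j
              = K (x 0) (x 0) * c i * s := by
            intro i; rw [← Finset.mul_sum]
          rw [Finset.sum_congr rfl fun i _ => h2 i]
          have h3 : ∀ i : Fin (m+1), K (x 0) (x 0) * c i * s
              = (K (x 0) (x 0) * s) * c i := fun i => by ring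
          rw [Finset.sum_congr rfl fun i _ => h3 i, ← Finset.mul_sum]
          ring
        rw [e1, e2, e3]
      rw [expψ]
      rw [hQd] at hneg
      have hK0 : (∑ j, K (x 0) (x j) * c j) = ∑ i, K (x i) (x 0) * c i :=
        Finset.sum_congr rfl fun i _ => by rw [hsymm]
      rw [hK0] at hneg ⊢
      linarith
    -- now exp(-(t K_ij)) = exp(t K₀₀) * exp(t ψ_ij) * e_i * e_j
    have htψ : PSDker (fun i j => Real.exp (t * ψ i j)) := by
      refine psd_exp (fun i j => by rw [hψsymm]) ?_
      intro c
      have := hψpsd c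
      have h : ∑ i, ∑ j, t * ψ i j * c i * c j = t * ∑ i, ∑ j, ψ i j * c i * c j := by
        rw [Finset.mul_sum]
        exact Finset.sum_congr rfl fun i _ => by
          rw [Finset.mul_sum]; exact Finset.sum_congr rfl fun j _ => by ring
      rw [h]
      exact mul_nonneg ht this
    intro c
    have h := htψ (fun i => Real.exp (-(t * K (x i) (x 0))) * c i)
    have key : ∑ i, ∑ j, Real.exp (-(t * K (x i) (x j))) * c i * c j
        = Real.exp (t * K (x 0) (x 0)) * ∑ i, ∑ j, Real.exp (t * ψ i j)
            * (Real.exp (-(t * K (x i) (x 0))) * c i)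
            * (Real.exp (-(t * K (x j) (x 0))) * c j) := by
      rw [Finset.mul_sum]
      refine Finset.sum_congr rfl fun i _ => ?_
      rw [Finset.mul_sum]
      refine Finset.sum_congr rfl fun j _ => ?_
      have harg : -(t * K (x i) (x j))
          = t * ψ i j + -(t * K (x i) (x 0)) + -(t * K (x j) (x 0)) + t * K (x 0) (x 0) := by
        simp only [hψ]
        rw [hsymm (x j) (x 0)]
        ring
      rw [harg, Real.exp_add, Real.exp_add, Real.exp_add]
      ring
    rw [key]
    have h' : 0 ≤ ∑ i, ∑ j, Real.exp (t * ψ i j)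
        * (Real.exp (-(t * K (x i) (x 0))) * c i)
        * (Real.exp (-(t * K (x j) (x 0))) * c j) := by simpa using h
    exact mul_nonneg (Real.exp_nonneg _) h'


lemma integrableOn_cnd_aux {α : ℝ} (hα₀ : 0 < α) (hα₁ : α < 1) {t : ℝ} (ht : 0 ≤ t) :
    IntegrableOn (fun u => (1 - Real.exp (-(u * t))) * u ^ (-1 - α)) (Ioi (0:ℝ)) := by
  have hcont : ContinuousOn (fun u : ℝ => (1 - Real.exp (-(u * t))) * u ^ (-1 - α)) (Ioi 0) := by
    refine ContinuousOn.mul (Continuous.continuousOn (by continuity)) fun u hu => ?_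
    exact (Real.continuousAt_rpow_const u _ (Or.inl (ne_of_gt hu))).continuousWithinAt
  have hbase : ∀ u : ℝ, 0 < u → 0 ≤ (1 - Real.exp (-(u * t))) * u ^ (-1 - α) := by
    intro u hu
    have h1 : Real.exp (-(u * t)) ≤ 1 := Real.exp_le_one_iff.mpr (neg_nonpos.mpr (mul_nonneg hu.le ht))
    have h2 : (0:ℝ) ≤ u ^ (-1 - α) := (Real.rpow_pos_of_pos hu _).le
    exact mul_nonneg (by linarith) h2
  have hub : ∀ u : ℝ, 1 - Real.exp (-(u * t)) ≤ u * t := by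
    intro u
    have := Real.add_one_le_exp (-(u * t))
    linarith
  have h1 : IntegrableOn (fun u => (1 - Real.exp (-(u * t))) * u ^ (-1 - α)) (Ioc (0:ℝ) 1) := by
    refine Integrable.mono' (g := fun u => t * u ^ (-α)) ?_ ?_ ?_
    · have := intervalIntegral.intervalIntegrable_rpow' (a := 0) (b := 1)
        (show (-1:ℝ) < -α by linarith)
      rw [intervalIntegrable_iff_integrableOn_Ioc_of_le (by norm_num)] at this
      exact this.const_mul t
    · exact (hcont.mono Ioc_subset_Ioi_self).aestronglyMeasurable measurableSet_Ioc
    · filter_upwards [ae_restrict_mem measurableSet_Ioc] with u hu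
      have hu0 : 0 < u := hu.1
      rw [Real.norm_of_nonneg (hbase u hu0)]
      have hr : u * u ^ (-1 - α) = u ^ (-α) := by
        nth_rewrite 1 [← Real.rpow_one u]
        rw [← Real.rpow_add hu0]
        congr 1
        ring
      calc (1 - Real.exp (-(u * t))) * u ^ (-1 - α)
          ≤ (u * t) * u ^ (-1 - α) :=
            mul_le_mul_of_nonneg_right (hub u) (Real.rpow_pos_of_pos hu0 _).le
        _ = t * (u * u ^ (-1 - α)) := by ring
        _ = t * u ^ (-α) := by rw [hr]
  have h2 : IntegrableOn (fun u => (1 - Real.exp (-(u * t))) * u ^ (-1 - α)) (Ioi (1:ℝ)) := by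
    refine Integrable.mono' (g := fun u => u ^ (-1 - α)) ?_ ?_ ?_
    · exact integrableOn_Ioi_rpow_of_lt (by linarith) one_pos
    · exact (hcont.mono fun u (hu : u ∈ Ioi (1:ℝ)) => (Set.mem_Ioi.mpr (lt_trans one_pos (Set.mem_Ioi.mp hu)))).aestronglyMeasurable measurableSet_Ioi
    · filter_upwards [ae_restrict_mem measurableSet_Ioi] with u hu
      have hu0 : (0:ℝ) < u := lt_trans one_pos hu
      rw [Real.norm_of_nonneg (hbase u hu0)]
      have h1' : 1 - Real.exp (-(u * t)) ≤ 1 := by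
        have := Real.exp_pos (-(u * t)); linarith
      calc (1 - Real.exp (-(u * t))) * u ^ (-1 - α)
          ≤ 1 * u ^ (-1 - α) :=
            mul_le_mul_of_nonneg_right h1' (Real.rpow_pos_of_pos hu0 _).le
        _ = u ^ (-1 - α) := one_mul _
  have := h1.union h2
  rwa [Ioc_union_Ioi_eq_Ioi (by norm_num : (0:ℝ) ≤ 1)] at this

lemma cnd_C_pos {α : ℝ} (hα₀ : 0 < α) (hα₁ : α < 1) :
    0 < ∫ u in Ioi (0:ℝ), (1 - Real.exp (-u)) * u ^ (-1 - α) := by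
  have hint : IntegrableOn (fun u => (1 - Real.exp (-u)) * u ^ (-1 - α)) (Ioi (0:ℝ)) := by
    exact (integrableOn_cnd_aux hα₀ hα₁ (t := 1) zero_le_one).congr_fun
      (fun u _ => by norm_num) measurableSet_Ioi
  rw [setIntegral_pos_iff_support_of_nonneg_ae ?_ hint]
  · have hsub : Ioi (0:ℝ) ⊆ Function.support (fun u => (1 - Real.exp (-u)) * u ^ (-1 - α)) := by
      intro u hu
      have h1 : Real.exp (-u) < 1 := Real.exp_lt_one_iff.mpr (by simpa using hu)
      have h2 : (0:ℝ) < u ^ (-1 - α) := Real.rpow_pos_of_pos hu _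
      have hpos : 0 < (1 - Real.exp (-u)) * u ^ (-1 - α) := mul_pos (by linarith) h2
      simpa [Function.mem_support] using hpos.ne'
    rw [Set.inter_eq_self_of_subset_right hsub, Real.volume_Ioi]
    exact ENNReal.zero_lt_top
  · filter_upwards [ae_restrict_mem measurableSet_Ioi] with u hu
    have h1 : Real.exp (-u) ≤ 1 := Real.exp_le_one_iff.mpr (by simpa using hu.le)
    have h2 : (0:ℝ) ≤ u ^ (-1 - α) := (Real.rpow_pos_of_pos hu _).le
    simpa using mul_nonneg (by linarith : (0:ℝ) ≤ 1 - Real.exp (-u)) h2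

lemma cnd_rpow_repr {α : ℝ} (hα₀ : 0 < α) (hα₁ : α < 1) {t : ℝ} (ht : 0 ≤ t) :
    t ^ α * (∫ u in Ioi (0:ℝ), (1 - Real.exp (-u)) * u ^ (-1 - α))
      = ∫ u in Ioi (0:ℝ), (1 - Real.exp (-(u * t))) * u ^ (-1 - α) := by
  rcases eq_or_lt_of_le ht with h0 | ht'
  · rw [← h0]
    simp [Real.zero_rpow hα₀.ne']
  · set g : ℝ → ℝ := fun v => (1 - Real.exp (-v)) * v ^ (-1 - α) with hg
    have key : ∀ u ∈ Ioi (0:ℝ), (1 - Real.exp (-(u * t))) * u ^ (-1 - α)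
        = t ^ ((1:ℝ) + α) * g (t * u) := by
      intro u hu
      have hu0 : (0:ℝ) < u := hu
      have hmul : (t * u) ^ (-1 - α) = t ^ (-1 - α) * u ^ (-1 - α) :=
        Real.mul_rpow ht'.le hu0.le
      have hpow : t ^ ((1:ℝ) + α) * t ^ (-1 - α) = 1 := by
        rw [← Real.rpow_add ht']
        norm_num
      simp only [hg, hmul]
      rw [mul_comm t u]
      linear_combination (-(1 - Real.exp (-(u * t))) * u ^ (-1 - α)) * hpow
    rw [setIntegral_congr_fun measurableSet_Ioi key, integral_const_mul,
      integral_comp_mul_left_Ioi g 0 ht', mul_zero, smul_eq_mul, ← mul_assoc]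
    congr 1
    rw [← Real.rpow_neg_one t, ← Real.rpow_add ht']
    norm_num


theorem cnd_rpow {X : Type*} (K : X → X → ℝ)
    (hK : IsCND K) (hpos : ∀ x y, 0 ≤ K x y) (α : ℝ) (hα₀ : 0 < α) (hα₁ : α < 1) :
    IsCND (fun x y => K x y ^ α) := by
  constructor
  · intro x y
    simp only [hK.1 x y]
  · intro n x c hc
    set C : ℝ := ∫ u in Ioi (0:ℝ), (1 - Real.exp (-u)) * u ^ (-1 - α) with hCdef
    have hC : 0 < C := cnd_C_pos hα₀ hα₁
    simp only []
    suffices hS : (∑ i, ∑ j, K (x i) (x j) ^ α * c i * c j) * C ≤ 0 by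
      by_contra hcon
      push_neg at hcon
      nlinarith
    calc (∑ i, ∑ j, K (x i) (x j) ^ α * c i * c j) * C
        = ∑ p : Fin n × Fin n,
            (∫ u in Ioi (0:ℝ), (1 - Real.exp (-(u * K (x p.1) (x p.2)))) * u ^ (-1 - α))
              * (c p.1 * c p.2) := by
          rw [← Finset.sum_product', Finset.sum_mul]
          refine Finset.sum_congr rfl fun p _ => ?_
          rw [← cnd_rpow_repr hα₀ hα₁ (hpos _ _)]
          ring
      _ = ∑ p : Fin n × Fin n,
            ∫ u in Ioi (0:ℝ), (1 - Real.exp (-(u * K (x p.1) (x p.2)))) * u ^ (-1 - α)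
              * (c p.1 * c p.2) := by
          refine Finset.sum_congr rfl fun p _ => ?_
          rw [integral_mul_const]
      _ = ∫ u in Ioi (0:ℝ), ∑ p : Fin n × Fin n,
            (1 - Real.exp (-(u * K (x p.1) (x p.2)))) * u ^ (-1 - α)
              * (c p.1 * c p.2) := by
          rw [← integral_finset_sum]
          intro p _
          exact (integrableOn_cnd_aux hα₀ hα₁ (hpos _ _)).mul_const _
      _ ≤ 0 := by
          apply integral_nonpos_of_ae
          filter_upwards [ae_restrict_mem measurableSet_Ioi] with u hu
          simp only [Pi.zero_apply]
          have hu0 : (0:ℝ) < u := hu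
          have hw : (0:ℝ) ≤ u ^ (-1 - α) := (Real.rpow_pos_of_pos hu0 _).le
          have h0 : ∑ p : Fin n × Fin n, c p.1 * c p.2 = 0 := by
            have : (∑ i, c i) * (∑ i, c i) = ∑ p : Fin n × Fin n, c p.1 * c p.2 := by
              rw [Finset.sum_mul_sum, ← Finset.sum_product', Finset.univ_product_univ]
            rw [← this, hc, mul_zero]
          have hA : 0 ≤ ∑ p : Fin n × Fin n,
              Real.exp (-(u * K (x p.1) (x p.2))) * c p.1 * c p.2 := by
            have h := schoenberg ⟨hK.1, hK.2⟩ x hu0.le c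
            rw [← Finset.sum_product'] at h
            simpa using h
          have key : ∑ p : Fin n × Fin n,
              (1 - Real.exp (-(u * K (x p.1) (x p.2)))) * u ^ (-1 - α) * (c p.1 * c p.2)
              = u ^ (-1 - α) * ((∑ p : Fin n × Fin n, c p.1 * c p.2)
                - ∑ p : Fin n × Fin n, Real.exp (-(u * K (x p.1) (x p.2))) * c p.1 * c p.2) := by
            rw [mul_sub, Finset.mul_sum, Finset.mul_sum, ← Finset.sum_sub_distrib]
            refine Finset.sum_congr rfl fun p _ => ?_
            ring
          rw [key, h0, zero_sub]
          nlinarith [mul_nonneg hw hA]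
end

section
/- Let (Ω, μ) be a measure space and 0 < p ≤ 2. Then the kernel (f,g) ↦ ∫_Ω |f(ω) - g(ω)|^p dμ(ω) is conditionally negative definite on L^p(μ). In particular, for 1 ≤ p ≤ 2, the kernel (f,g) ↦ ‖f - g‖_p^p is conditionally negative definite on L^p(μ). -/
open Finset

open MeasureTheory

section Aux
open Real Set Finset MeasureTheory

noncomputable def Gk (p u : ℝ) (s : ℝ) : ℝ := (1 - Real.cos (u * s)) * s ^ (-1 - p)

lemma Gk_nonneg {p u s : ℝ} (hs : 0 < s) : 0 ≤ Gk p u s := by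
  have h1 : Real.cos (u * s) ≤ 1 := Real.cos_le_one _
  have h2 : (0:ℝ) ≤ s ^ (-1 - p) := Real.rpow_nonneg hs.le _
  have : 0 ≤ 1 - Real.cos (u * s) := by linarith
  exact mul_nonneg this h2

lemma Gk_integrable {p : ℝ} (hp0 : 0 < p) (hp2 : p < 2) (u : ℝ) :
    IntegrableOn (Gk p u) (Ioi (0:ℝ)) := by
  have hcont : ContinuousOn (Gk p u) (Ioi (0:ℝ)) := by
    apply ContinuousOn.mul
    · exact (Continuous.continuousOn (by continuity))
    · exact ContinuousOn.rpow_const continuousOn_id (fun s hs => Or.inl (ne_of_gt hs))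
  have h01 : IntegrableOn (Gk p u) (Ioc (0:ℝ) 1) := by
    have hg : IntegrableOn (fun s : ℝ => u ^ 2 / 2 * s ^ (1 - p)) (Ioc (0:ℝ) 1) := by
      have := (intervalIntegral.intervalIntegrable_rpow' (r := 1 - p) (by linarith) (a:=0) (b:=1))
      rw [intervalIntegrable_iff_integrableOn_Ioc_of_le (by norm_num : (0:ℝ) ≤ 1)] at this
      exact this.const_mul _
    apply hg.integrable.mono'
      ((hcont.mono Ioc_subset_Ioi_self).aestronglyMeasurable measurableSet_Ioc)
    filter_upwards [ae_restrict_mem measurableSet_Ioc] with s hs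
    obtain ⟨hs0, hs1⟩ := hs
    have h1 : 1 - Real.cos (u * s) ≤ (u * s) ^ 2 / 2 := by
      have := Real.one_sub_sq_div_two_le_cos (x := u * s); linarith
    rw [Real.norm_eq_abs, abs_of_nonneg (Gk_nonneg hs0)]
    have h2 : (0:ℝ) ≤ s ^ (-1 - p) := Real.rpow_nonneg hs0.le _
    calc Gk p u s ≤ (u * s) ^ 2 / 2 * s ^ (-1 - p) := by
          exact mul_le_mul_of_nonneg_right h1 h2
      _ = u ^ 2 / 2 * (s ^ (2:ℝ) * s ^ (-1 - p)) := by
          rw [Real.rpow_two]; ring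
      _ = u ^ 2 / 2 * s ^ (1 - p) := by
          rw [← Real.rpow_add hs0]; ring_nf
  have h1i : IntegrableOn (Gk p u) (Ioi (1:ℝ)) := by
    have hg : IntegrableOn (fun s : ℝ => 2 * s ^ (-1 - p)) (Ioi (1:ℝ)) :=
      (integrableOn_Ioi_rpow_of_lt (by linarith) one_pos).const_mul 2
    apply hg.integrable.mono'
      ((hcont.mono (Ioi_subset_Ioi (by norm_num))).aestronglyMeasurable measurableSet_Ioi)
    filter_upwards [ae_restrict_mem measurableSet_Ioi] with s hs
    have hs0 : (0:ℝ) < s := lt_trans one_pos hs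
    rw [Real.norm_eq_abs, abs_of_nonneg (Gk_nonneg hs0)]
    have h1 : 1 - Real.cos (u * s) ≤ 2 := by
      have := Real.neg_one_le_cos (u * s); linarith
    exact mul_le_mul_of_nonneg_right h1 (Real.rpow_nonneg hs0.le _)
  have := h01.union h1i
  rwa [Ioc_union_Ioi_eq_Ioi (by norm_num : (0:ℝ) ≤ 1)] at this



noncomputable def cker (p u : ℝ) : ℝ := ∫ s in Ioi (0:ℝ), Gk p u s

lemma cker_scale_pos {p u : ℝ} (hp0 : 0 < p) (hu : 0 < u) :
    cker p u = u ^ p * cker p 1 := by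
  have key : ∀ s ∈ Ioi (0:ℝ), Gk p u s = u ^ (1 + p) * Gk p 1 (u * s) := by
    intro s hs
    have hs0 : (0:ℝ) < s := hs
    have hus : (0:ℝ) < u * s := mul_pos hu hs0
    simp only [Gk, one_mul]
    rw [Real.mul_rpow hu.le hs0.le]
    rw [show u ^ (-1 - p) = (u ^ (1 + p))⁻¹ by
      rw [← Real.rpow_neg hu.le]; ring_nf]
    field_simp
  calc cker p u = ∫ s in Ioi (0:ℝ), u ^ (1 + p) * Gk p 1 (u * s) :=
        setIntegral_congr_fun measurableSet_Ioi key
    _ = u ^ (1 + p) * ∫ s in Ioi (0:ℝ), Gk p 1 (u * s) := by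
        rw [integral_const_mul]
    _ = u ^ (1 + p) * (u⁻¹ • ∫ t in Ioi (u * 0), Gk p 1 t) := by
        rw [MeasureTheory.integral_comp_mul_left_Ioi (Gk p 1) 0 hu]
    _ = u ^ p * cker p 1 := by
        rw [mul_zero, smul_eq_mul, cker, ← mul_assoc, Real.rpow_add hu, Real.rpow_one]
        field_simp

lemma cker_eq {p : ℝ} (hp0 : 0 < p) (u : ℝ) : cker p u = |u| ^ p * cker p 1 := by
  rcases lt_trichotomy u 0 with h | h | h
  · have : cker p u = cker p (-u) := by
      unfold cker Gk
      congr 1; ext s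
      rw [neg_mul, Real.cos_neg]
    rw [this, cker_scale_pos hp0 (by linarith : (0:ℝ) < -u), abs_of_neg h]
  · subst h
    simp [cker, Gk, Real.zero_rpow hp0.ne', abs_zero]
  · rw [cker_scale_pos hp0 h, abs_of_pos h]

lemma Gk_nonneg' {p u s : ℝ} (hs : 0 < s) : 0 ≤ Gk p u s := by
  have h1 : Real.cos (u * s) ≤ 1 := Real.cos_le_one _
  exact mul_nonneg (by linarith) (Real.rpow_nonneg hs.le _)

lemma cker_one_pos {p : ℝ} (hp0 : 0 < p) (hp2 : p < 2)
    (hint : IntegrableOn (Gk p 1) (Ioi (0:ℝ))) : 0 < cker p 1 := by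
  have hsub : Ioc (π/2) π ⊆ Ioi (0:ℝ) := fun s hs => lt_trans (by positivity) hs.1
  have hlow : ∀ s ∈ Ioc (π/2) π, (π ^ (1+p))⁻¹ ≤ Gk p 1 s := by
    intro s hs
    obtain ⟨hs1, hs2⟩ := hs
    have hs0 : (0:ℝ) < s := lt_trans (by positivity) hs1
    have hcos : Real.cos s ≤ 0 :=
      Real.cos_nonpos_of_pi_div_two_le_of_le hs1.le (by linarith [Real.pi_pos])
    have h1 : (1:ℝ) ≤ 1 - Real.cos s := by linarith
    have h2 : (π ^ (1+p))⁻¹ ≤ s ^ (-1-p) := by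
      rw [show (-1-p) = -(1+p) by ring, Real.rpow_neg hs0.le]
      apply inv_anti₀ (Real.rpow_pos_of_pos hs0 _)
      exact Real.rpow_le_rpow hs0.le hs2 (by linarith)
    calc (π ^ (1+p))⁻¹ = 1 * (π ^ (1+p))⁻¹ := (one_mul _).symm
      _ ≤ (1 - Real.cos s) * s ^ (-1-p) := by
          apply mul_le_mul h1 h2 (by positivity) (by linarith)
      _ = Gk p 1 s := by rw [Gk, one_mul]
  have hmeas : MeasurableSet (Ioc (π/2) π) := measurableSet_Ioc
  have hμ : volume (Ioc (π/2) π) ≠ ⊤ := by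
    rw [Real.volume_Ioc]; exact ENNReal.ofReal_ne_top
  have hIoc : IntegrableOn (Gk p 1) (Ioc (π/2) π) := hint.mono_set hsub
  have h1 : (π ^ (1+p))⁻¹ * (volume (Ioc (π/2) π)).toReal ≤ ∫ s in Ioc (π/2) π, Gk p 1 s :=
    setIntegral_ge_of_const_le_real hmeas hμ hlow hIoc
  have h2 : ∫ s in Ioc (π/2) π, Gk p 1 s ≤ cker p 1 := by
    apply setIntegral_mono_set hint
    · filter_upwards [ae_restrict_mem measurableSet_Ioi] with s hs
      exact Gk_nonneg' hs
    · exact HasSubset.Subset.eventuallyLE hsub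
  have hvol : (0:ℝ) < (volume (Ioc (π/2) π)).toReal := by
    rw [Real.volume_Ioc, ENNReal.toReal_ofReal (by linarith [Real.pi_pos])]
    linarith [Real.pi_pos]
  have : (0:ℝ) < (π ^ (1+p))⁻¹ * (volume (Ioc (π/2) π)).toReal := by
    apply mul_pos _ hvol
    exact inv_pos.mpr (Real.rpow_pos_of_pos Real.pi_pos _)
  linarith



section pointwise
variable {n : ℕ} (x c : Fin n → ℝ) (s : ℝ)

lemma double_sum_eq (q : ℝ) (hc : ∑ i, c i = 0) :
    ∑ i, ∑ j, (1 - Real.cos ((x i - x j) * s)) * q * c i * c j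
      = -(((∑ i, c i * Real.cos (x i * s)) ^ 2 + (∑ i, c i * Real.sin (x i * s)) ^ 2) * q) := by
  have expand : ∀ i j, (1 - Real.cos ((x i - x j) * s)) * q * c i * c j
      = c i * c j * q - (c i * Real.cos (x i * s)) * (c j * Real.cos (x j * s)) * q
        - (c i * Real.sin (x i * s)) * (c j * Real.sin (x j * s)) * q := by
    intro i j
    rw [show (x i - x j) * s = x i * s - x j * s by ring, Real.cos_sub]
    ring
  have e2 : ∀ f : Fin n → ℝ, ∑ i, ∑ j, (f i) * (f j) * q = (∑ i, f i) ^ 2 * q := by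
    intro f
    rw [sq, Finset.sum_mul_sum, Finset.sum_mul]
    refine Finset.sum_congr rfl fun i _ => ?_
    rw [Finset.sum_mul]
  have e1 : ∑ i, ∑ j, c i * c j * q = (∑ i, c i) ^ 2 * q := e2 c
  simp only [expand, Finset.sum_sub_distrib]
  rw [e1, e2 (fun i => c i * Real.cos (x i * s)), e2 (fun i => c i * Real.sin (x i * s)), hc]
  ring

end pointwise

lemma rcnd_two {n : ℕ} (x c : Fin n → ℝ) (hc : ∑ i, c i = 0) :
    ∑ i, ∑ j, |x i - x j| ^ (2:ℝ) * c i * c j ≤ 0 := by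
  have habs : ∀ a : ℝ, |a| ^ (2:ℝ) = a ^ 2 := fun a => by
    rw [show (2:ℝ) = ((2:ℕ):ℝ) by norm_num, Real.rpow_natCast, sq_abs]
  have expand : ∀ i j : Fin n, |x i - x j| ^ (2:ℝ) * c i * c j
      = (x i ^ 2 * c i) * c j + c i * (x j ^ 2 * c j) - 2 * ((x i * c i) * (x j * c j)) := by
    intro i j; rw [habs]; ring
  have e : ∀ f g : Fin n → ℝ, ∑ i, ∑ j, f i * g j = (∑ i, f i) * (∑ j, g j) :=
    fun f g => (Finset.sum_mul_sum _ _ _ _).symm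
  simp only [expand, Finset.sum_sub_distrib, Finset.sum_add_distrib, ← Finset.mul_sum,
    ← Finset.sum_mul]
  rw [hc]
  nlinarith [mul_self_nonneg (∑ i, x i * c i)]

lemma rcnd_lt {p : ℝ} (hp0 : 0 < p) (hp2 : p < 2) {n : ℕ} (x c : Fin n → ℝ)
    (hc : ∑ i, c i = 0) : ∑ i, ∑ j, |x i - x j| ^ p * c i * c j ≤ 0 := by
  have hck : 0 < cker p 1 := cker_one_pos hp0 hp2 (Gk_integrable hp0 hp2 1)
  have hInt : ∀ (i j : Fin n),
      IntegrableOn (fun s => Gk p (x i - x j) s * c i * c j) (Ioi (0:ℝ)) :=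
    fun i j => ((Gk_integrable hp0 hp2 _).mul_const _).mul_const _
  have key : (∑ i, ∑ j, |x i - x j| ^ p * c i * c j) * cker p 1 ≤ 0 := by
    calc (∑ i, ∑ j, |x i - x j| ^ p * c i * c j) * cker p 1
        = ∑ i, ∑ j, cker p (x i - x j) * c i * c j := by
          rw [Finset.sum_mul]
          refine Finset.sum_congr rfl fun i _ => ?_
          rw [Finset.sum_mul]
          refine Finset.sum_congr rfl fun j _ => ?_
          rw [cker_eq hp0 (x i - x j)]
          ring
      _ = ∑ i, ∑ j, ∫ s in Ioi (0:ℝ), Gk p (x i - x j) s * c i * c j := by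
          refine Finset.sum_congr rfl fun i _ => Finset.sum_congr rfl fun j _ => ?_
          rw [cker, ← integral_mul_const, ← integral_mul_const]
      _ = ∫ s in Ioi (0:ℝ), ∑ i, ∑ j, Gk p (x i - x j) s * c i * c j := by
          rw [integral_finset_sum _
            (fun i _ => integrable_finset_sum _ (fun j _ => hInt i j))]
          exact Finset.sum_congr rfl fun i _ =>
            (integral_finset_sum _ (fun j _ => hInt i j)).symm
      _ ≤ 0 := by
          apply integral_nonpos_of_ae
          rw [Filter.EventuallyLE, ae_restrict_iff' measurableSet_Ioi]
          refine Filter.Eventually.of_forall fun s hs => ?_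
          have hq : (0:ℝ) ≤ s ^ (-1 - p) := Real.rpow_nonneg (le_of_lt hs) _
          simp only [Gk, Pi.zero_apply]
          rw [double_sum_eq x c s _ hc]
          have h1 : (0:ℝ) ≤ (∑ i, c i * Real.cos (x i * s)) ^ 2
              + (∑ i, c i * Real.sin (x i * s)) ^ 2 := by positivity
          nlinarith
  nlinarith

lemma rcnd {p : ℝ} (hp0 : 0 < p) (hp2 : p ≤ 2) {n : ℕ} (x c : Fin n → ℝ)
    (hc : ∑ i, c i = 0) : ∑ i, ∑ j, |x i - x j| ^ p * c i * c j ≤ 0 := by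
  rcases eq_or_lt_of_le hp2 with h | h
  · subst h; exact rcnd_two x c hc
  · exact rcnd_lt hp0 h x c hc

end Aux

theorem cnd_Lp {Ω : Type*} [MeasurableSpace Ω] (μ : Measure Ω)
    (p : ℝ) (hp₀ : 0 < p) (hp₂ : p ≤ 2) :
    IsCND (fun f g : Lp ℝ (ENNReal.ofReal p) μ => ∫ ω, |f ω - g ω| ^ p ∂μ) ∧
    (1 ≤ p → IsCND (fun f g : Lp ℝ (ENNReal.ofReal p) μ => ‖f - g‖ ^ p)) := by
  have hP0 : ENNReal.ofReal p ≠ 0 := by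
    rw [Ne, ENNReal.ofReal_eq_zero]; linarith
  have hPt : ENNReal.ofReal p ≠ ⊤ := ENNReal.ofReal_ne_top
  have hint : ∀ f g : Lp ℝ (ENNReal.ofReal p) μ,
      Integrable (fun ω => |f ω - g ω| ^ p) μ := by
    intro f g
    have h1 : MemLp (⇑(f - g)) (ENNReal.ofReal p) μ := Lp.memLp _
    have h2 := h1.integrable_norm_rpow hP0 hPt
    rw [ENNReal.toReal_ofReal hp₀.le] at h2
    apply h2.congr
    filter_upwards [Lp.coeFn_sub f g] with ω hω
    rw [hω]; simp [Real.norm_eq_abs]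
  have hfst : IsCND (fun f g : Lp ℝ (ENNReal.ofReal p) μ => ∫ ω, |f ω - g ω| ^ p ∂μ) := by
    constructor
    · intro f g
      simp only
      congr 1
      funext ω
      rw [abs_sub_comm]
    · intro n f c hc
      simp only
      calc ∑ i, ∑ j, (∫ ω, |f i ω - f j ω| ^ p ∂μ) * c i * c j
          = ∑ i, ∑ j, ∫ ω, |f i ω - f j ω| ^ p * c i * c j ∂μ := by
            refine Finset.sum_congr rfl fun i _ => Finset.sum_congr rfl fun j _ => ?_
            rw [← integral_mul_const, ← integral_mul_const]
        _ = ∫ ω, ∑ i, ∑ j, |f i ω - f j ω| ^ p * c i * c j ∂μ := by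
            rw [integral_finset_sum _ (fun i _ => integrable_finset_sum _
              (fun j _ => ((hint (f i) (f j)).mul_const _).mul_const _))]
            exact Finset.sum_congr rfl fun i _ =>
              (integral_finset_sum _
                (fun j _ => ((hint (f i) (f j)).mul_const _).mul_const _)).symm
        _ ≤ 0 := integral_nonpos fun ω => rcnd hp₀ hp₂ (fun i => f i ω) c hc
  refine ⟨hfst, fun hp1 => ?_⟩
  have hkey : (fun f g : Lp ℝ (ENNReal.ofReal p) μ => ‖f - g‖ ^ p)
      = fun f g : Lp ℝ (ENNReal.ofReal p) μ => ∫ ω, |f ω - g ω| ^ p ∂μ := by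
    funext f g
    have h1 : MemLp (⇑(f - g)) (ENNReal.ofReal p) μ := Lp.memLp _
    have hX : (0:ℝ) ≤ ∫ ω, ‖(f - g) ω‖ ^ p ∂μ :=
      integral_nonneg fun ω => Real.rpow_nonneg (norm_nonneg _) _
    rw [Lp.norm_def, h1.eLpNorm_eq_integral_rpow_norm hP0 hPt,
      ENNReal.toReal_ofReal hp₀.le,
      ENNReal.toReal_ofReal (Real.rpow_nonneg hX _),
      ← Real.rpow_mul hX, inv_mul_cancel₀ hp₀.ne', Real.rpow_one]
    refine integral_congr_ae ?_
    filter_upwards [Lp.coeFn_sub f g] with ω hω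
    rw [hω]; simp [Real.norm_eq_abs]
  rw [hkey]
  exact hfst
end

section
/- Let Γ be a discrete group admitting a linear isometric representation π on L^p(μ) (1 ≤ p ≤ 2) with a cocycle γ : Γ → L^p(μ). Then the function ψ : Γ → ℝ, ψ(g) = ‖γ(g)‖_p^p, is conditionally negative definite, i.e., the kernel K(g,h) = ψ(g h⁻¹) is conditionally negative definite; moreover ψ(g) = ψ(g⁻¹) and ψ(g) ≥ 0 for all g. -/
open Finset

open MeasureTheory

section Aux
open Real Set

lemma sum_cos_kernel_nonneg (n : ℕ) (x c : Fin n → ℝ) :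
    0 ≤ ∑ i, ∑ j, Real.cos (x i - x j) * c i * c j := by
  have h : ∑ i, ∑ j, Real.cos (x i - x j) * c i * c j
      = (∑ i, c i * Real.cos (x i)) ^ 2 + (∑ i, c i * Real.sin (x i)) ^ 2 := by
    rw [sq, sq, Finset.sum_mul_sum, Finset.sum_mul_sum, ← Finset.sum_add_distrib]
    refine Finset.sum_congr rfl fun i _ => ?_
    rw [← Finset.sum_add_distrib]
    refine Finset.sum_congr rfl fun j _ => ?_
    rw [Real.cos_sub]; ring
  rw [h]; positivity

lemma sum_one_sub_cos_nonpos (n : ℕ) (x c : Fin n → ℝ) (hc : ∑ i, c i = 0) :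
    ∑ i, ∑ j, (1 - Real.cos (x i - x j)) * c i * c j ≤ 0 := by
  have h : ∑ i, ∑ j, (1 - Real.cos (x i - x j)) * c i * c j
      = (∑ i, c i) * (∑ j, c j) - ∑ i, ∑ j, Real.cos (x i - x j) * c i * c j := by
    rw [Finset.sum_mul_sum, ← Finset.sum_sub_distrib]
    refine Finset.sum_congr rfl fun i _ => ?_
    rw [← Finset.sum_sub_distrib]
    refine Finset.sum_congr rfl fun j _ => ?_
    ring
  rw [h, hc, zero_mul]
  linarith [sum_cos_kernel_nonneg n x c]

lemma integrableOn_aux {p : ℝ} (hp : 0 < p) (hp2 : p < 2) (x : ℝ) :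
    IntegrableOn (fun s => (1 - Real.cos (x * s)) / s ^ (1 + p)) (Ioi (0:ℝ)) := by
  have hmeas : Measurable (fun s : ℝ => (1 - Real.cos (x * s)) / s ^ (1 + p)) := by
    exact (measurable_const.sub ((measurable_const_mul x).cos)).div
      (measurable_id.pow_const _)
  have h1 : IntegrableOn (fun s => (1 - Real.cos (x * s)) / s ^ (1 + p)) (Ioc (0:ℝ) 1) := by
    have hint : IntegrableOn (fun s : ℝ => x ^ 2 * s ^ (1 - p)) (Ioc (0:ℝ) 1) := by
      have := (intervalIntegral.intervalIntegrable_rpow' (a := 0) (b := 1)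
        (r := 1 - p) (by linarith)).const_mul (x ^ 2)
      rwa [intervalIntegrable_iff_integrableOn_Ioc_of_le zero_le_one] at this
    refine Integrable.mono' hint hmeas.aestronglyMeasurable ?_
    filter_upwards [ae_restrict_mem measurableSet_Ioc] with s hs
    obtain ⟨hs0, hs1⟩ := hs
    have hsp : (0:ℝ) < s ^ (1 + p) := Real.rpow_pos_of_pos hs0 _
    have hcos : 0 ≤ 1 - Real.cos (x * s) := by linarith [Real.cos_le_one (x * s)]
    rw [Real.norm_eq_abs, abs_of_nonneg (div_nonneg hcos hsp.le), div_le_iff₀ hsp]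
    have hb : 1 - Real.cos (x * s) ≤ (x * s) ^ 2 / 2 := by
      linarith [Real.one_sub_sq_div_two_le_cos (x := x * s)]
    have : x ^ 2 * s ^ (1 - p) * s ^ (1 + p) = x ^ 2 * s ^ 2 := by
      rw [mul_assoc, ← Real.rpow_add hs0]
      norm_num

    rw [this]
    nlinarith [sq_nonneg (x * s)]
  have h2 : IntegrableOn (fun s => (1 - Real.cos (x * s)) / s ^ (1 + p)) (Ioi (1:ℝ)) := by
    have hint : IntegrableOn (fun s : ℝ => 2 * s ^ (-(1 + p))) (Ioi (1:ℝ)) :=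
      (integrableOn_Ioi_rpow_of_lt (by linarith) one_pos).const_mul 2
    refine Integrable.mono' hint hmeas.aestronglyMeasurable ?_
    filter_upwards [ae_restrict_mem measurableSet_Ioi] with s hs
    have hs0 : (0:ℝ) < s := lt_trans one_pos hs
    have hsp : (0:ℝ) < s ^ (1 + p) := Real.rpow_pos_of_pos hs0 _
    have hcos : 0 ≤ 1 - Real.cos (x * s) := by linarith [Real.cos_le_one (x * s)]
    rw [Real.norm_eq_abs, abs_of_nonneg (div_nonneg hcos hsp.le),
      Real.rpow_neg hs0.le]
    rw [div_le_iff₀ hsp]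
    have h2' : (0:ℝ) < (s ^ (1+p))⁻¹ := by positivity
    have : 2 * (s ^ (1 + p))⁻¹ * s ^ (1 + p) = 2 := by field_simp
    rw [this]
    linarith [Real.neg_one_le_cos (x * s)]
  have heq : Ioi (0:ℝ) = Set.Ioc (0:ℝ) 1 ∪ Set.Ioi (1:ℝ) :=
    (Set.Ioc_union_Ioi_eq_Ioi zero_le_one).symm
  rw [heq]
  exact h1.union h2

noncomputable def Cp (p : ℝ) : ℝ := ∫ s in Set.Ioi (0:ℝ), (1 - Real.cos s) / s ^ (1 + p)

lemma scaling_aux {p : ℝ} (hp : 0 < p) (hp2 : p < 2) (x : ℝ) :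
    ∫ s in Ioi (0:ℝ), (1 - Real.cos (x * s)) / s ^ (1 + p) = |x| ^ p * Cp p := by
  rcases eq_or_ne x 0 with rfl | hx
  · simp [Real.zero_rpow hp.ne', Cp]
  · have hax : 0 < |x| := abs_pos.mpr hx
    have hcos : ∀ s, Real.cos (x * s) = Real.cos (|x| * s) := by
      intro s
      rcases abs_choice x with h | h
      · rw [h]
      · rw [h]; rw [neg_mul, Real.cos_neg]
    calc ∫ s in Ioi (0:ℝ), (1 - Real.cos (x * s)) / s ^ (1 + p)
        = ∫ s in Ioi (0:ℝ), |x| ^ (1 + p) * ((1 - Real.cos (|x| * s)) / (|x| * s) ^ (1 + p)) := by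
          refine setIntegral_congr_fun measurableSet_Ioi fun s hs => ?_
          have hs0 : (0:ℝ) < s := hs
          rw [hcos, Real.mul_rpow hax.le hs0.le]
          field_simp
      _ = |x| ^ (1 + p) * ∫ s in Ioi (0:ℝ), (1 - Real.cos (|x| * s)) / (|x| * s) ^ (1 + p) := by
          rw [integral_const_mul]
      _ = |x| ^ (1 + p) * (|x|⁻¹ • ∫ s in Ioi (0:ℝ), (1 - Real.cos s) / s ^ (1 + p)) := by
          rw [integral_comp_mul_left_Ioi (fun t => (1 - Real.cos t) / t ^ (1 + p)) 0 hax,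
            mul_zero]
      _ = |x| ^ p * Cp p := by
          rw [smul_eq_mul, Cp, ← mul_assoc]
          congr 1
          rw [← Real.rpow_neg_one |x|, ← Real.rpow_add hax]
          congr 1; ring



lemma Cp_pos {p : ℝ} (hp : 0 < p) (hp2 : p < 2) : 0 < Cp p := by
  have hnn : (fun _ : ℝ => (0:ℝ)) ≤ᵐ[volume.restrict (Ioi (0:ℝ))]
      fun s => (1 - Real.cos s) / s ^ (1 + p) := by
    filter_upwards [ae_restrict_mem measurableSet_Ioi] with s hs
    have : (0:ℝ) < s := hs
    have h1 := Real.cos_le_one s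
    have hd : (0:ℝ) < s ^ (1 + p) := Real.rpow_pos_of_pos this _
    exact div_nonneg (by linarith) hd.le
  have hint : IntegrableOn (fun s : ℝ => (1 - Real.cos s) / s ^ (1 + p)) (Ioi 0) := by
    simpa using integrableOn_aux hp hp2 1
  rw [Cp, setIntegral_pos_iff_support_of_nonneg_ae hnn hint]
  have hsub : Set.Ioo (π/2) π ⊆
      (Function.support fun s => (1 - Real.cos s) / s ^ (1 + p)) ∩ Ioi 0 := by
    intro s hs
    have hs1 : π/2 < s := hs.1
    have hs2 : s < π := hs.2
    have hs0 : (0:ℝ) < s := lt_trans (by positivity) hs1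
    constructor
    · have hc : Real.cos s ≤ 0 := Real.cos_nonpos_of_pi_div_two_le_of_le hs1.le (by linarith)
      have hnum : (0:ℝ) < 1 - Real.cos s := by linarith
      have hden : (0:ℝ) < s ^ (1 + p) := Real.rpow_pos_of_pos hs0 _
      exact ne_of_gt (div_pos hnum hden)
    · exact hs0
  calc (0:ENNReal) < volume (Set.Ioo (π/2) π) := by
        rw [Real.volume_Ioo]
        simp only [ENNReal.ofReal_pos]
        linarith [Real.pi_gt_three]
    _ ≤ _ := measure_mono hsub



lemma real_cnd_lt {p : ℝ} (hp : 0 < p) (hp2 : p < 2) (n : ℕ) (x c : Fin n → ℝ)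
    (hc : ∑ i, c i = 0) : ∑ i, ∑ j, |x i - x j| ^ p * c i * c j ≤ 0 := by
  have hC := Cp_pos hp hp2
  have key : ∀ i j : Fin n, |x i - x j| ^ p * c i * c j
      = (Cp p)⁻¹ * ∫ s in Ioi (0:ℝ),
          ((1 - Real.cos ((x i - x j) * s)) / s ^ (1 + p)) * c i * c j := by
    intro i j
    rw [show (fun s => ((1 - Real.cos ((x i - x j) * s)) / s ^ (1 + p)) * c i * c j)
        = fun s => ((1 - Real.cos ((x i - x j) * s)) / s ^ (1 + p)) * (c i * c j) by
      funext s; ring]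
    rw [integral_mul_const, scaling_aux hp hp2]
    field_simp
  calc ∑ i, ∑ j, |x i - x j| ^ p * c i * c j
      = (Cp p)⁻¹ * ∑ i, ∑ j, ∫ s in Ioi (0:ℝ),
          ((1 - Real.cos ((x i - x j) * s)) / s ^ (1 + p)) * c i * c j := by
        rw [Finset.mul_sum]
        refine Finset.sum_congr rfl fun i _ => ?_
        rw [Finset.mul_sum]
        exact Finset.sum_congr rfl fun j _ => key i j
    _ = (Cp p)⁻¹ * ∫ s in Ioi (0:ℝ), ∑ i, ∑ j,
          ((1 - Real.cos ((x i - x j) * s)) / s ^ (1 + p)) * c i * c j := by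
        congr 1
        rw [integral_finset_sum _ (fun i _ =>
          integrable_finset_sum _ fun j _ =>
            (((integrableOn_aux hp hp2 (x i - x j)).mul_const (c i)).mul_const (c j)))]
        exact Finset.sum_congr rfl fun i _ =>
          (integral_finset_sum _ fun j _ =>
            (((integrableOn_aux hp hp2 (x i - x j)).mul_const (c i)).mul_const (c j))).symm
    _ ≤ 0 := by
        apply mul_nonpos_of_nonneg_of_nonpos (inv_nonneg.mpr hC.le)
        apply integral_nonpos_of_ae
        filter_upwards [ae_restrict_mem measurableSet_Ioi] with s hs
        have hs0 : (0:ℝ) < s := hs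
        have hden : (0:ℝ) < s ^ (1 + p) := Real.rpow_pos_of_pos hs0 _
        have hsum := sum_one_sub_cos_nonpos n (fun i => x i * s) c hc
        have : ∑ i, ∑ j, ((1 - Real.cos ((x i - x j) * s)) / s ^ (1 + p)) * c i * c j
            = (∑ i, ∑ j, (1 - Real.cos (x i * s - x j * s)) * c i * c j) / s ^ (1 + p) := by
          rw [Finset.sum_div]
          refine Finset.sum_congr rfl fun i _ => ?_
          rw [Finset.sum_div]
          refine Finset.sum_congr rfl fun j _ => ?_
          rw [show x i * s - x j * s = (x i - x j) * s by ring]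
          ring
        rw [this]
        exact div_nonpos_of_nonpos_of_nonneg hsum hden.le

lemma real_cnd_two (n : ℕ) (x c : Fin n → ℝ) (hc : ∑ i, c i = 0) :
    ∑ i, ∑ j, |x i - x j| ^ (2:ℝ) * c i * c j ≤ 0 := by
  have key : ∑ i, ∑ j, |x i - x j| ^ (2:ℝ) * c i * c j
      = (∑ i, (x i)^2 * c i) * (∑ j, c j) + (∑ i, c i) * (∑ j, (x j)^2 * c j)
        - 2 * (∑ i, x i * c i) ^ 2 := by
    rw [sq (∑ i, x i * c i), Finset.sum_mul_sum, Finset.sum_mul_sum, Finset.sum_mul_sum,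
      Finset.mul_sum]
    rw [← Finset.sum_add_distrib, ← Finset.sum_sub_distrib]
    refine Finset.sum_congr rfl fun i _ => ?_
    rw [Finset.mul_sum, ← Finset.sum_add_distrib, ← Finset.sum_sub_distrib]
    refine Finset.sum_congr rfl fun j _ => ?_
    rw [Real.rpow_two, sq_abs]
    ring
  rw [key, hc]
  nlinarith [sq_nonneg (∑ i, x i * c i)]

lemma real_cnd {p : ℝ} (hp : 0 < p) (hp2 : p ≤ 2) (n : ℕ) (x c : Fin n → ℝ)
    (hc : ∑ i, c i = 0) : ∑ i, ∑ j, |x i - x j| ^ p * c i * c j ≤ 0 := by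
  rcases lt_or_eq_of_le hp2 with h | rfl
  · exact real_cnd_lt hp h n x c hc
  · exact real_cnd_two n x c hc

variable {Ω : Type*} [MeasurableSpace Ω] {μ : MeasureTheory.Measure Ω}

lemma lp_norm_rpow {p : ℝ} (hp₁ : 1 ≤ p) [Fact (1 ≤ ENNReal.ofReal p)]
    (f : Lp ℝ (ENNReal.ofReal p) μ) :
    ‖f‖ ^ p = ∫ a, |f a| ^ p ∂μ := by
  have hp0 : 0 < p := lt_of_lt_of_le one_pos hp₁
  have hP0 : ENNReal.ofReal p ≠ 0 := by
    simp [ENNReal.ofReal_eq_zero]; linarith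
  have hPtop : ENNReal.ofReal p ≠ ⊤ := ENNReal.ofReal_ne_top
  have htr : (ENNReal.ofReal p).toReal = p := ENNReal.toReal_ofReal hp0.le
  rw [Lp.norm_def, (Lp.memLp f).eLpNorm_eq_integral_rpow_norm hP0 hPtop, htr]
  have hnn : 0 ≤ ∫ a, ‖f a‖ ^ p ∂μ :=
    integral_nonneg fun a => Real.rpow_nonneg (norm_nonneg _) _
  rw [ENNReal.toReal_ofReal (Real.rpow_nonneg hnn _)]
  rw [Real.rpow_inv_rpow hnn hp0.ne']
  simp_rw [Real.norm_eq_abs]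

lemma lp_integrable_rpow {p : ℝ} (hp₁ : 1 ≤ p) [Fact (1 ≤ ENNReal.ofReal p)]
    (f : Lp ℝ (ENNReal.ofReal p) μ) :
    Integrable (fun a => |f a| ^ p) μ := by
  have hp0 : 0 < p := lt_of_lt_of_le one_pos hp₁
  have hP0 : ENNReal.ofReal p ≠ 0 := by
    simp [ENNReal.ofReal_eq_zero]; linarith
  have htr : (ENNReal.ofReal p).toReal = p := ENNReal.toReal_ofReal hp0.le
  have := (Lp.memLp f).integrable_norm_rpow hP0 ENNReal.ofReal_ne_top
  rw [htr] at this
  simpa [Real.norm_eq_abs] using this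

lemma lp_cnd {p : ℝ} (hp₁ : 1 ≤ p) (hp₂ : p ≤ 2) [Fact (1 ≤ ENNReal.ofReal p)]
    (n : ℕ) (f : Fin n → Lp ℝ (ENNReal.ofReal p) μ) (c : Fin n → ℝ)
    (hc : ∑ i, c i = 0) :
    ∑ i, ∑ j, ‖f i - f j‖ ^ p * c i * c j ≤ 0 := by
  have hp0 : 0 < p := lt_of_lt_of_le one_pos hp₁
  have key : ∀ i j : Fin n, ‖f i - f j‖ ^ p = ∫ a, |f i a - f j a| ^ p ∂μ := by
    intro i j
    rw [lp_norm_rpow hp₁]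
    refine integral_congr_ae ?_
    filter_upwards [Lp.coeFn_sub (f i) (f j)] with a ha
    rw [ha, Pi.sub_apply]
  have hint : ∀ i j : Fin n, Integrable (fun a => |f i a - f j a| ^ p * c i * c j) μ := by
    intro i j
    refine (Integrable.congr (lp_integrable_rpow hp₁ (f i - f j)) ?_).mul_const _ |>.mul_const _
    filter_upwards [Lp.coeFn_sub (f i) (f j)] with a ha
    rw [ha, Pi.sub_apply]
  calc ∑ i, ∑ j, ‖f i - f j‖ ^ p * c i * c j
      = ∫ a, ∑ i, ∑ j, |f i a - f j a| ^ p * c i * c j ∂μ := by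
        rw [integral_finset_sum _ (fun i _ => integrable_finset_sum _ fun j _ => hint i j)]
        refine Finset.sum_congr rfl fun i _ => ?_
        rw [integral_finset_sum _ (fun j _ => hint i j)]
        refine Finset.sum_congr rfl fun j _ => ?_
        rw [key i j, ← integral_mul_const, ← integral_mul_const]
    _ ≤ 0 := by
        apply integral_nonpos
        intro a
        exact real_cnd hp0 hp₂ n (fun i => f i a) c hc


end Aux

theorem cocycle_gives_cnd_function {Γ : Type*} [Group Γ]
    {Ω : Type*} [MeasurableSpace Ω] (μ : Measure Ω)
    (p : ℝ) (hp₁ : 1 ≤ p) (hp₂ : p ≤ 2) [Fact (1 ≤ ENNReal.ofReal p)]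
    (π : Γ →* (Lp ℝ (ENNReal.ofReal p) μ ≃ₗᵢ[ℝ] Lp ℝ (ENNReal.ofReal p) μ))
    (γ : Γ → Lp ℝ (ENNReal.ofReal p) μ)
    (hcocycle : ∀ g h, γ (g * h) = π g (γ h) + γ g) :
    IsCND (fun g h : Γ => ‖γ (g * h⁻¹)‖ ^ p) ∧
    (∀ g : Γ, ‖γ g‖ ^ p = ‖γ g⁻¹‖ ^ p) ∧
    (∀ g : Γ, 0 ≤ ‖γ g‖ ^ p) := by
  set f : Γ → Lp ℝ (ENNReal.ofReal p) μ := fun g => π g⁻¹ (γ g) with hf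
  have hkey : ∀ g h : Γ, ‖γ (g * h⁻¹)‖ = ‖f g - f h‖ := by
    intro g h
    have h1 : γ g = π (g * h⁻¹) (γ h) + γ (g * h⁻¹) := by
      have := hcocycle (g * h⁻¹) h
      rwa [inv_mul_cancel_right] at this
    have h2 : γ (g * h⁻¹) = γ g - π (g * h⁻¹) (γ h) := by
      rw [h1]; abel
    have h3 : π g⁻¹ (γ (g * h⁻¹)) = f g - f h := by
      rw [h2, map_sub, hf]
      congr 1
      have hcomp : ∀ (a b : Γ) (v : Lp ℝ (ENNReal.ofReal p) μ),
          π (a * b) v = π a (π b v) := fun a b v => by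
        rw [map_mul, LinearIsometryEquiv.coe_mul, Function.comp_apply]
      rw [← hcomp, inv_mul_cancel_left]
    calc ‖γ (g * h⁻¹)‖ = ‖π g⁻¹ (γ (g * h⁻¹))‖ := (LinearIsometryEquiv.norm_map _ _).symm
      _ = ‖f g - f h‖ := by rw [h3]
  refine ⟨⟨?_, ?_⟩, ?_, ?_⟩
  · intro g h
    simp only [hkey]
    rw [norm_sub_rev]
  · intro n x c hc
    simp only [hkey]
    exact lp_cnd hp₁ hp₂ n (fun i => f (x i)) c hc
  · intro g
    have h1 : ‖γ g‖ = ‖f g - f 1‖ := by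
      have := hkey g 1
      rwa [inv_one, mul_one] at this
    have h2 : ‖γ g⁻¹‖ = ‖f 1 - f g‖ := by
      have := hkey 1 g
      rwa [one_mul] at this
    rw [h1, h2, norm_sub_rev]
  · intro g
    exact Real.rpow_nonneg (norm_nonneg _) _
end
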